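/- Let D be a finite set, R ⊆ D^n a nonempty n-ary relation, 𝒟 = 𝒟(R) the digraph constructed from R, and k ≥ 1. Then D^k ⊆ Δ_k and R^k ⊆ Δ_k, where Δ_k is the weakly connected component of the direct power 𝒟^k containing the diagonal. -/

import Mathlib

open scoped NNRat

/-- A homomorphism between digraphs given by their edge relations. -/
def IsDigraphHom {V₁ V₂ : Type*} (E₁ : V₁ → V₁ → Prop) (E₂ : V₂ → V₂ → Prop)
    (h : V₁ → V₂) : Prop :=
  ∀ a b, E₁ a b → E₂ (h a) (h b)

/-- Weak reachability (connectivity by oriented paths) in a digraph. -/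
def WeakReach {V : Type*} (E : V → V → Prop) : V → V → Prop :=
  Relation.ReflTransGen fun a b => E a b ∨ E b a

/-- Edge relation of the direct power of a digraph. -/
def powEdge {V : Type*} (k : ℕ) (E : V → V → Prop) :
    (Fin k → V) → (Fin k → V) → Prop :=
  fun c d => ∀ i, E (c i) (d i)

/-- The directions of the edges of the oriented path `Q_S`: a single edge, then for
each `l` a single edge (if `l ∈ S`) or a zigzag (otherwise), then a single edge. -/
def QDirs (n : ℕ) (S : Finset (Fin n)) : List Bool :=
  true :: (((List.finRange n).flatMap fun l =>
    if l ∈ S then [true] else [true, false, true]) ++ [true])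

/-- The edge relation of the oriented path whose edge directions are given by `ds`;
its vertices are `0, …, ds.length`, `0` being initial and `ds.length` terminal. -/
def pathEdge (ds : List Bool) : Fin (ds.length + 1) → Fin (ds.length + 1) → Prop :=
  fun a b => ∃ i : Fin ds.length,
    if ds.get i = true then a = i.castSucc ∧ b = i.succ
    else a = i.succ ∧ b = i.castSucc

/-- The directions of the path `Q_{{i : d = r i}}` replacing the edge `(d, r)`. -/
def pathDirs {D : Type} [DecidableEq D] {n : ℕ} (d : D) (r : Fin n → D) : List Bool :=
  QDirs n (Finset.univ.filter fun i => d = r i)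

/-- Internal vertices of the copies of the paths `Q_{{i : d = r i}}` in `𝒟(R)`. -/
structure InnerVert (D : Type) [DecidableEq D] (n : ℕ) (R : Set (Fin n → D)) where
  d : D
  r : Fin n → D
  hr : r ∈ R
  j : ℕ
  hj0 : 0 < j
  hjlen : j < (pathDirs d r).length

/-- The vertex set of the digraph `𝒟(R)`: base vertices `D`, top vertices `R`, and
the internal vertices of the connecting oriented paths. -/
def DVert (D : Type) [DecidableEq D] (n : ℕ) (R : Set (Fin n → D)) : Type :=
  D ⊕ ({t : Fin n → D // t ∈ R} ⊕ InnerVert D n R)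

/-- The `j`-th vertex of the copy of the path `Q_{{i : d = t i}}` joining `d` to `t`. -/
def pathVert {D : Type} [DecidableEq D] {n : ℕ} {R : Set (Fin n → D)}
    (d : D) (t : Fin n → D) (ht : t ∈ R) (j : ℕ) : DVert D n R :=
  if hj0 : j = 0 then Sum.inl d
  else if hjl : (pathDirs d t).length ≤ j then Sum.inr (Sum.inl ⟨t, ht⟩)
  else Sum.inr (Sum.inr ⟨d, t, ht, j, Nat.pos_of_ne_zero hj0, not_le.mp hjl⟩)

/-- The edge relation of the digraph `𝒟(R)`. -/
def DEdge {D : Type} [DecidableEq D] {n : ℕ} {R : Set (Fin n → D)} :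
    DVert D n R → DVert D n R → Prop :=
  fun a b => ∃ (d : D) (t : Fin n → D) (ht : t ∈ R) (i : ℕ)
      (hi : i < (pathDirs d t).length),
    if (pathDirs d t).get ⟨i, hi⟩ = true then
      a = pathVert d t ht i ∧ b = pathVert d t ht (i + 1)
    else
      a = pathVert d t ht (i + 1) ∧ b = pathVert d t ht i

/-- A unary polymorphism of an `n`-ary relation `R`. -/
def IsUnaryPolymorphism {D : Type} {n : ℕ} (R : Set (Fin n → D)) (g : D → D) : Prop :=
  ∀ t ∈ R, (fun i => g (t i)) ∈ R

/-- The unary cost function `u` on the vertices of `𝒟(R)` associated to `ρ : R → ℚ≥0`. -/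
def uFun {D : Type} [DecidableEq D] {n : ℕ} {R : Set (Fin n → D)}
    (ρ : {t : Fin n → D // t ∈ R} → ℚ≥0) : DVert D n R → ℚ≥0 :=
  fun v => match v with
  | Sum.inl _ => 0
  | Sum.inr (Sum.inl t) => ρ t
  | Sum.inr (Sum.inr _) => 0

/-!
Every path `Q_S` is a homomorphic image of the all-zigzag path `Q_∅` by a map fixing both
ends: a zigzag `•→•←•→•` folds onto a single edge. Hence for `c ∈ D^k` and `r ∈ R^k` the
coordinatewise homomorphisms `Q_∅ → Q_{{j : c i = r i j}}` combine into one homomorphism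
`Q_∅ → 𝒟^k` from `c` to `r`. Taking `r`, resp. `c`, constant puts `D^k` and `R^k` in the
component of the diagonal, which is a single component because `𝒟` itself is connected.
-/

namespace WeakReach

variable {V W : Type*} {E : V → V → Prop} {a b c : V}

theorem symm (h : WeakReach E a b) : WeakReach E b a := by
  induction h with
  | refl => exact .refl
  | tail _ hbc ih => exact .head hbc.symm ih

theorem trans (hab : WeakReach E a b) (hbc : WeakReach E b c) : WeakReach E a c :=
  Relation.ReflTransGen.trans hab hbc

theorem map {F : W → W → Prop} {f : V → W} (hf : IsDigraphHom E F f)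
    (h : WeakReach E a b) : WeakReach F (f a) (f b) :=
  Relation.ReflTransGen.lift f (fun x y hxy => hxy.imp (hf x y) (hf y x)) _ _ h

end WeakReach

theorem isDigraphHom_diag {V : Type*} (k : ℕ) (E : V → V → Prop) :
    IsDigraphHom E (powEdge k E) fun v _ => v :=
  fun _ _ h _ => h

/-- `OrientedWalk E ds a b` holds iff some homomorphism `pathEdge ds → E` sends the initial
vertex to `a` and the terminal vertex to `b`. -/
def OrientedWalk {V : Type*} (E : V → V → Prop) : List Bool → V → V → Prop
  | [], a, b => a = b
  | dir :: ds, a, b => ∃ x, (if dir then E a x else E x a) ∧ OrientedWalk E ds x b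

namespace OrientedWalk

variable {V : Type*} {E : V → V → Prop}

theorem weakReach {ds : List Bool} {a b : V} (h : OrientedWalk E ds a b) : WeakReach E a b := by
  induction ds generalizing a with
  | nil => exact h ▸ Relation.ReflTransGen.refl
  | cons dir ds ih =>
    obtain ⟨x, hx, hxb⟩ := h
    refine Relation.ReflTransGen.head ?_ (ih hxb)
    cases dir
    · exact Or.inr hx
    · exact Or.inl hx

theorem append_iff {ds es : List Bool} {a c : V} :
    OrientedWalk E (ds ++ es) a c ↔ ∃ b, OrientedWalk E ds a b ∧ OrientedWalk E es b c := by
  induction ds generalizing a with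
  | nil => simp [OrientedWalk]
  | cons dir ds ih =>
    simp only [List.cons_append, OrientedWalk, ih]
    exact ⟨fun ⟨x, hx, b, hxb, hbc⟩ => ⟨b, ⟨x, hx, hxb⟩, hbc⟩,
      fun ⟨b, ⟨x, hx, hxb⟩, hbc⟩ => ⟨x, hx, b, hxb, hbc⟩⟩

theorem zigzag_of_edge {a b : V} (h : OrientedWalk E [true] a b) :
    OrientedWalk E [true, false, true] a b := by
  obtain ⟨x, hax, rfl⟩ := h
  exact ⟨x, hax, a, hax, x, hax, rfl⟩

theorem flatMap_mono {ι : Type*} {f g : ι → List Bool}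
    (hfg : ∀ l a b, OrientedWalk E (f l) a b → OrientedWalk E (g l) a b) :
    ∀ (L : List ι) {a b : V}, OrientedWalk E (L.flatMap f) a b →
      OrientedWalk E (L.flatMap g) a b
  | [], _, _, h => h
  | l :: L, _, _, h => by
    rw [List.flatMap_cons, append_iff] at h ⊢
    obtain ⟨x, hl, hL⟩ := h
    exact ⟨x, hfg l _ _ hl, flatMap_mono hfg L hL⟩

theorem qDirs_empty {n : ℕ} {S : Finset (Fin n)} {a b : V}
    (h : OrientedWalk E (QDirs n S) a b) : OrientedWalk E (QDirs n ∅) a b := by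
  obtain ⟨x, hax, hxb⟩ := h
  refine ⟨x, hax, ?_⟩
  rw [append_iff] at hxb ⊢
  obtain ⟨y, hxy, hyb⟩ := hxb
  refine ⟨y, flatMap_mono (fun l a b hab => ?_) _ hxy, hyb⟩
  rw [if_neg (Finset.notMem_empty l)]
  split_ifs at hab
  · exact zigzag_of_edge hab
  · exact hab

theorem pow {k : ℕ} {ds : List Bool} {a b : Fin k → V}
    (h : ∀ i, OrientedWalk E ds (a i) (b i)) : OrientedWalk (powEdge k E) ds a b := by
  induction ds generalizing a with
  | nil => exact funext h
  | cons dir ds ih =>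
    choose x hx hxb using h
    refine ⟨x, ?_, ih hxb⟩
    cases dir <;> exact hx

theorem drop_of_edges (ds : List Bool) (p : ℕ → V)
    (hp : ∀ i (hi : i < ds.length), if ds[i] then E (p i) (p (i + 1)) else E (p (i + 1)) (p i)) :
    ∀ j ≤ ds.length, OrientedWalk E (ds.drop j) (p j) (p ds.length) := by
  induction ds generalizing p with
  | nil => intro j hj; simp_all [OrientedWalk]
  | cons dir ds ih =>
    have ih' := ih (fun i => p (i + 1)) fun i hi => hp (i + 1) (Nat.succ_lt_succ hi)
    rintro (_ | j) hj
    · exact ⟨p 1, hp 0 (Nat.succ_pos _), ih' 0 (Nat.zero_le _)⟩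
    · exact ih' j (Nat.le_of_succ_le_succ hj)

end OrientedWalk

section PathDigraph

variable {D : Type} [DecidableEq D] {n : ℕ} {R : Set (Fin n → D)}

theorem pathVert_zero (d : D) (t : Fin n → D) (ht : t ∈ R) :
    pathVert d t ht 0 = Sum.inl d :=
  dif_pos rfl

theorem pathVert_length (d : D) (t : Fin n → D) (ht : t ∈ R) :
    pathVert d t ht (pathDirs d t).length = Sum.inr (Sum.inl ⟨t, ht⟩) :=
  (dif_neg (by simp [pathDirs, QDirs])).trans (dif_pos le_rfl)

theorem pathVert_innerVert (x : InnerVert D n R) :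
    pathVert x.d x.r x.hr x.j = Sum.inr (Sum.inr x) :=
  (dif_neg x.hj0.ne').trans (dif_neg (not_le.mpr x.hjlen))

theorem orientedWalk_drop_pathDirs (d : D) (t : Fin n → D) (ht : t ∈ R) {j : ℕ}
    (hj : j ≤ (pathDirs d t).length) :
    OrientedWalk DEdge ((pathDirs d t).drop j) (pathVert d t ht j)
      (Sum.inr (Sum.inl ⟨t, ht⟩)) := by
  rw [← pathVert_length d t ht]
  refine OrientedWalk.drop_of_edges _ _ (fun i hi => ?_) j hj
  split_ifs with hdir
  · exact ⟨d, t, ht, i, hi, by rw [List.get_eq_getElem, if_pos hdir]; exact ⟨rfl, rfl⟩⟩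
  · exact ⟨d, t, ht, i, hi, by rw [List.get_eq_getElem, if_neg hdir]; exact ⟨rfl, rfl⟩⟩

theorem orientedWalk_qDirs_empty (d : D) (t : Fin n → D) (ht : t ∈ R) :
    OrientedWalk DEdge (QDirs n ∅) (Sum.inl d) (Sum.inr (Sum.inl ⟨t, ht⟩)) := by
  have h := orientedWalk_drop_pathDirs d t ht (Nat.zero_le _)
  rw [List.drop_zero, pathVert_zero] at h
  exact h.qDirs_empty

theorem weakReach_inl_inr (d : D) (t : Fin n → D) (ht : t ∈ R) :
    WeakReach DEdge (Sum.inl d : DVert D n R) (Sum.inr (Sum.inl ⟨t, ht⟩)) :=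
  (orientedWalk_qDirs_empty d t ht).weakReach

theorem weakReach_innerVert (x : InnerVert D n R) :
    WeakReach DEdge (Sum.inr (Sum.inr x) : DVert D n R) (Sum.inr (Sum.inl ⟨x.r, x.hr⟩)) := by
  rw [← pathVert_innerVert]
  exact (orientedWalk_drop_pathDirs x.d x.r x.hr x.hjlen.le).weakReach

theorem weakReach_dEdge [Nonempty D] (hR : R.Nonempty) (v w : DVert D n R) :
    WeakReach DEdge v w := by
  obtain ⟨t₀, ht₀⟩ := hR
  let d₀ : D := Classical.arbitrary D
  have to_top : ∀ v : DVert D n R, WeakReach DEdge v (Sum.inr (Sum.inl ⟨t₀, ht₀⟩)) := by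
    have of_top : ∀ s : {t // t ∈ R},
        WeakReach DEdge (Sum.inr (Sum.inl s) : DVert D n R) (Sum.inr (Sum.inl ⟨t₀, ht₀⟩)) :=
      fun s => (weakReach_inl_inr d₀ s.1 s.2).symm.trans (weakReach_inl_inr d₀ t₀ ht₀)
    rintro (d | s | x)
    · exact weakReach_inl_inr d t₀ ht₀
    · exact of_top s
    · exact (weakReach_innerVert x).trans (of_top _)
  exact (to_top v).trans (to_top w).symm

theorem weakReach_powEdge_inl_inr {k : ℕ} (c : Fin k → D) (r : Fin k → {t // t ∈ R}) :
    WeakReach (powEdge k DEdge) (fun i => (Sum.inl (c i) : DVert D n R))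
      (fun i => Sum.inr (Sum.inl (r i))) :=
  (OrientedWalk.pow fun i => orientedWalk_qDirs_empty (c i) (r i).1 (r i).2).weakReach

end PathDigraph

theorem diag_component_contains_Dk_Rk_general {D : Type} [DecidableEq D] {n : ℕ}
    (hn : 1 ≤ n) (R : Set (Fin n → D)) (hR : R.Nonempty) (k : ℕ) :
    (∀ v w : DVert D n R,
      WeakReach (powEdge k DEdge) (fun _ => v) (fun _ => w)) ∧
    (∀ c : Fin k → D, ∃ v : DVert D n R,
      WeakReach (powEdge k DEdge) (fun _ => v) (fun i => Sum.inl (c i))) ∧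
    (∀ r : Fin k → {t : Fin n → D // t ∈ R}, ∃ v : DVert D n R,
      WeakReach (powEdge k DEdge) (fun _ => v) (fun i => Sum.inr (Sum.inl (r i)))) := by
  obtain ⟨t₀, ht₀⟩ := hR
  have : Nonempty D := ⟨t₀ ⟨0, hn⟩⟩
  refine ⟨fun v w => ?_, fun c => ?_, fun r => ?_⟩
  · exact (weakReach_dEdge ⟨t₀, ht₀⟩ v w).map (isDigraphHom_diag k DEdge)
  · exact ⟨_, (weakReach_powEdge_inl_inr c fun _ => ⟨t₀, ht₀⟩).symm⟩
  · exact ⟨_, weakReach_powEdge_inl_inr (fun _ => t₀ ⟨0, hn⟩) r⟩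

/-- in the direct power `𝒟(R)^k`, the diagonal lies in one weakly
connected component `Δ_k`, and `D^k ⊆ Δ_k` and `R^k ⊆ Δ_k`. -/
theorem diag_component_contains_Dk_Rk {D : Type} [Fintype D] [DecidableEq D] {n : ℕ}
    (hn : 1 ≤ n) (R : Set (Fin n → D)) (hR : R.Nonempty) (k : ℕ) (hk : 1 ≤ k) :
    (∀ v w : DVert D n R,
      WeakReach (powEdge k DEdge) (fun _ => v) (fun _ => w)) ∧
    (∀ c : Fin k → D, ∃ v : DVert D n R,
      WeakReach (powEdge k DEdge) (fun _ => v) (fun i => Sum.inl (c i))) ∧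
    (∀ r : Fin k → {t : Fin n → D // t ∈ R}, ∃ v : DVert D n R,
      WeakReach (powEdge k DEdge) (fun _ => v) (fun i => Sum.inr (Sum.inl (r i)))) :=
  diag_component_contains_Dk_Rk_general hn R hR k
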